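/- Let R be a ring with identity and a nontrivial idempotent e, let g : R → R satisfy Assumption A, and let f : R → R be a multiplicative generalized skew semi-derivation with associated map g, multiplicative skew semi-derivation d, and automorphism α. Then for all a₁₁ ∈ R₁₁, a₁₂ ∈ R₁₂, a₂₁ ∈ R₂₁, a₂₂ ∈ R₂₂: f(a₁₁ + a₁₂ + a₂₁ + a₂₂) = f(a₁₁) + f(a₁₂) + f(a₂₁) + f(a₂₂). -/
import Mathlib


/-- `pel e 0 = e₁ = e`, `pel e 1 = e₂ = 1 - e`. -/
def pel {R : Type*} [Ring R] (e : R) : Fin 2 → R := fun i => if i = 0 then e else 1 - e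

/-- The Peirce component `R_ij = e_i R e_j`. -/
def peirceSet {R : Type*} [Ring R] (e : R) (i j : Fin 2) : Set R :=
  {x | ∃ r : R, x = pel e i * r * pel e j}

/-- A multiplicative skew semi-derivation `d` with associated map `g` and automorphism `α`. -/
def IsMultSkewSemiDeriv {R : Type*} [Ring R] (d g : R → R) (α : R ≃+* R) : Prop :=
  (∀ x y : R, d (x * y) = d x * g y + α x * d y) ∧
  (∀ x y : R, d (x * y) = d x * α y + g x * d y) ∧
  (∀ x : R, d (g x) = g (d x))

/-- A multiplicative generalized skew semi-derivation `f` with associated map `g`,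
multiplicative skew semi-derivation `d` and automorphism `α`. -/
def IsMultGenSkewSemiDeriv {R : Type*} [Ring R] (f d g : R → R) (α : R ≃+* R) : Prop :=
  (∀ x y : R, f (x * y) = f x * g y + α x * d y) ∧
  (∀ x y : R, f (x * y) = d x * α y + g x * f y) ∧
  (∀ x : R, f (g x) = g (f x))

/-- Assumption A on the map `g`. -/
def AssumptionA {R : Type*} [Ring R] (e : R) (g : R → R) : Prop :=
  g 0 = 0 ∧
  (∀ i j k : Fin 2, i ≤ j →
    ∀ a ∈ peirceSet e k 0, ∀ b ∈ peirceSet e k 1,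
      (∀ x ∈ peirceSet e i j, (a + b) * g x = 0) →
      (i = 0 → a = 0) ∧ (i = 1 → b = 0)) ∧
  (∀ i j : Fin 2,
    ∀ a ∈ peirceSet e 0 j, ∀ b ∈ peirceSet e 1 j,
      (∀ x ∈ peirceSet e i i, g x * (a + b) = 0) →
      (i = 0 → a = 0) ∧ (i = 1 → b = 0)) ∧
  (∀ a ∈ peirceSet e 0 0, ∀ b ∈ peirceSet e 0 1, g (a + b) = g a + g b) ∧
  (∀ a ∈ peirceSet e 0 0, ∀ b ∈ peirceSet e 1 0, g (a + b) = g a + g b)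

/-- Assumption B on the map `g`. -/
def AssumptionB {R : Type*} [Ring R] (e : R) (g : R → R) : Prop :=
  g 0 = 0 ∧
  (∀ i j : Fin 2,
    ∀ a ∈ peirceSet e j 0, ∀ b ∈ peirceSet e j 1,
      (∀ x ∈ peirceSet e i i, (a + b) * g x = 0) → a + b = 0) ∧
  (∀ i : Fin 2,
    ∀ a ∈ peirceSet e 0 0, ∀ c ∈ peirceSet e 1 0,
      (∀ x ∈ peirceSet e i i, g x * (a + c) = 0) → a + c = 0)

lemma pel_mul {R : Type*} [Ring R] {e : R} (he : e * e = e) (i j : Fin 2) :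
    pel e i * pel e j = if i = j then pel e i else 0 := by
  have h01 : e * (1 - e) = 0 := by rw [mul_sub, mul_one, he, sub_self]
  have h10 : (1 - e) * e = 0 := by rw [sub_mul, one_mul, he, sub_self]
  have h11 : (1 - e) * (1 - e) = 1 - e := by
    rw [sub_mul, one_mul, mul_sub, mul_one, he, sub_self, sub_zero]
  fin_cases i <;> fin_cases j <;> simp [pel, he, h01, h10, h11]

lemma pel_sum {R : Type*} [Ring R] (e : R) : pel e 0 + pel e 1 = 1 := by
  simp [pel]

lemma pmul_zero {R : Type*} [Ring R] {e : R} (he : e * e = e) {i j k l : Fin 2}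
    (h : j ≠ k) {x y : R} (hx : x ∈ peirceSet e i j) (hy : y ∈ peirceSet e k l) :
    x * y = 0 := by
  obtain ⟨r, rfl⟩ := hx
  obtain ⟨s, rfl⟩ := hy
  have hjk : pel e j * pel e k = 0 := by rw [pel_mul he, if_neg h]
  calc pel e i * r * pel e j * (pel e k * s * pel e l)
      = pel e i * r * (pel e j * pel e k) * s * pel e l := by noncomm_ring
    _ = 0 := by rw [hjk, mul_zero, zero_mul, zero_mul]

lemma pmul_mem {R : Type*} [Ring R] {e : R} (he : e * e = e) {i j l : Fin 2}
    {x y : R} (hx : x ∈ peirceSet e i j) (hy : y ∈ peirceSet e j l) :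
    x * y ∈ peirceSet e i l := by
  obtain ⟨r, rfl⟩ := hx
  obtain ⟨s, rfl⟩ := hy
  refine ⟨r * pel e j * s, ?_⟩
  have hjj : pel e j * pel e j = pel e j := by rw [pel_mul he, if_pos rfl]
  calc pel e i * r * pel e j * (pel e j * s * pel e l)
      = pel e i * r * (pel e j * pel e j) * s * pel e l := by noncomm_ring
    _ = pel e i * (r * pel e j * s) * pel e l := by rw [hjj]; noncomm_ring

lemma f_zero {R : Type*} [Ring R] {e : R} {g : R → R} (hg : AssumptionA e g)
    {α : R ≃+* R} {d f : R → R} (hf : IsMultGenSkewSemiDeriv f d g α) : f 0 = 0 := by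
  have := hf.1 0 0
  simpa [hg.1] using this

lemma left_add {R : Type*} [Ring R] {e : R} (he : e * e = e)
    {g : R → R} (hg : AssumptionA e g) {α : R ≃+* R} {d f : R → R}
    (hf : IsMultGenSkewSemiDeriv f d g α)
    (j : Fin 2) {p q : R} (hp : p ∈ peirceSet e 0 j) (hq : q ∈ peirceSet e 1 j) :
    f (p + q) = f p + f q := by
  have hf0 : f 0 = 0 := f_zero hg hf
  have key : ∀ i : Fin 2, ∀ x ∈ peirceSet e i i,
      g x * (f (p + q) - f p - f q) = 0 := by
    intro i x hx
    fin_cases i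
    · have hxq : x * q = 0 := pmul_zero he (by decide) hx hq
      have hxpq : x * (p + q) = x * p := by rw [mul_add, hxq, add_zero]
      have h1 := hf.2.1 x (p + q)
      have h2 := hf.2.1 x p
      have h3 := hf.2.1 x q
      rw [hxq, hf0] at h3
      rw [hxpq, h2, map_add] at h1
      have expand : g x * (f (p + q) - f p - f q) =
          (d x * (α p + α q) + g x * f (p + q)) - (d x * α p + g x * f p)
            - (d x * α q + g x * f q) := by noncomm_ring
      rw [expand, ← h1, ← h3, sub_zero, sub_self]
    · have hxp : x * p = 0 := pmul_zero he (by decide) hx hp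
      have hxpq : x * (p + q) = x * q := by rw [mul_add, hxp, zero_add]
      have h1 := hf.2.1 x (p + q)
      have h2 := hf.2.1 x q
      have h3 := hf.2.1 x p
      rw [hxp, hf0] at h3
      rw [hxpq, h2, map_add] at h1
      have expand : g x * (f (p + q) - f p - f q) =
          (d x * (α p + α q) + g x * f (p + q)) - (d x * α q + g x * f q)
            - (d x * α p + g x * f p) := by noncomm_ring
      rw [expand, ← h1, ← h3, sub_zero, sub_self]
  set T := f (p + q) - f p - f q with hT
  have comp : ∀ i l : Fin 2, pel e i * T * pel e l = 0 := by
    intro i l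
    have hcond : ∀ k : Fin 2, ∀ x ∈ peirceSet e k k,
        g x * (pel e 0 * T * pel e l + pel e 1 * T * pel e l) = 0 := by
      intro k x hx
      have hab : pel e 0 * T * pel e l + pel e 1 * T * pel e l
          = (pel e 0 + pel e 1) * T * pel e l := by noncomm_ring
      rw [hab, pel_sum, one_mul, ← mul_assoc, key k x hx, zero_mul]
    have := hg.2.2.1 i l (pel e 0 * T * pel e l) ⟨T, rfl⟩
      (pel e 1 * T * pel e l) ⟨T, rfl⟩ (hcond i)
    fin_cases i
    · exact this.1 rfl
    · exact this.2 rfl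
  have hdec : T = pel e 0 * T * pel e 0 + pel e 0 * T * pel e 1
      + (pel e 1 * T * pel e 0 + pel e 1 * T * pel e 1) := by
    calc T = (pel e 0 + pel e 1) * T * (pel e 0 + pel e 1) := by
          rw [pel_sum, one_mul, mul_one]
      _ = _ := by noncomm_ring
  have hT0 : T = 0 := by
    rw [hdec, comp 0 0, comp 0 1, comp 1 0, comp 1 1]; simp
  rw [hT] at hT0
  rwa [sub_sub, sub_eq_zero] at hT0
theorem stmt_18 {R : Type*} [Ring R] (e : R) (he : e * e = e) (he0 : e ≠ 0) (he1 : e ≠ 1)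
    (g : R → R) (hg : AssumptionA e g) (α : R ≃+* R) (d f : R → R)
    (hd : IsMultSkewSemiDeriv d g α)
    (hf : IsMultGenSkewSemiDeriv f d g α) :
    ∀ a11 ∈ peirceSet e 0 0, ∀ a12 ∈ peirceSet e 0 1, ∀ a21 ∈ peirceSet e 1 0,
      ∀ a22 ∈ peirceSet e 1 1,
        f (a11 + a12 + a21 + a22) = f a11 + f a12 + f a21 + f a22 := by
  intro a11 h11 a12 h12 a21 h21 a22 h22
  have hf0 : f 0 = 0 := f_zero hg hf
  have key : ∀ jj : Fin 2, ∀ x ∈ peirceSet e jj jj,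
      (f (a11 + a12 + a21 + a22) - (f a11 + f a12 + f a21 + f a22)) * g x = 0 := by
    intro jj x hx
    fin_cases jj
    · have z12 : a12 * x = 0 := pmul_zero he (by decide) h12 hx
      have z22 : a22 * x = 0 := pmul_zero he (by decide) h22 hx
      have hSx : (a11 + a12 + a21 + a22) * x = a11 * x + a21 * x := by
        simp only [add_mul, z12, z22, add_zero]
      have hadd : f (a11 * x + a21 * x) = f (a11 * x) + f (a21 * x) :=
        left_add he hg hf 0 (pmul_mem he h11 hx) (pmul_mem he h21 hx)
      have h1 := hf.1 (a11 + a12 + a21 + a22) x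
      have h2 := hf.1 a11 x
      have h3 := hf.1 a12 x
      have h4 := hf.1 a21 x
      have h5 := hf.1 a22 x
      rw [z12, hf0] at h3
      rw [z22, hf0] at h5
      rw [hSx, hadd, h2, h4] at h1
      simp only [map_add] at h1
      have expand : (f (a11 + a12 + a21 + a22) - (f a11 + f a12 + f a21 + f a22)) * g x =
          (f (a11 + a12 + a21 + a22) * g x
            + (α a11 + α a12 + α a21 + α a22) * d x)
          - ((f a11 * g x + α a11 * d x) + (f a21 * g x + α a21 * d x))
          - (f a12 * g x + α a12 * d x) - (f a22 * g x + α a22 * d x) := by noncomm_ring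
      rw [expand, ← h1, ← h3, ← h5, sub_zero, sub_zero, sub_self]
    · have z11 : a11 * x = 0 := pmul_zero he (by decide) h11 hx
      have z21 : a21 * x = 0 := pmul_zero he (by decide) h21 hx
      have hSx : (a11 + a12 + a21 + a22) * x = a12 * x + a22 * x := by
        simp only [add_mul, z11, z21, add_zero, zero_add]
      have hadd : f (a12 * x + a22 * x) = f (a12 * x) + f (a22 * x) :=
        left_add he hg hf 1 (pmul_mem he h12 hx) (pmul_mem he h22 hx)
      have h1 := hf.1 (a11 + a12 + a21 + a22) x
      have h2 := hf.1 a12 x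
      have h3 := hf.1 a11 x
      have h4 := hf.1 a22 x
      have h5 := hf.1 a21 x
      rw [z11, hf0] at h3
      rw [z21, hf0] at h5
      rw [hSx, hadd, h2, h4] at h1
      simp only [map_add] at h1
      have expand : (f (a11 + a12 + a21 + a22) - (f a11 + f a12 + f a21 + f a22)) * g x =
          (f (a11 + a12 + a21 + a22) * g x
            + (α a11 + α a12 + α a21 + α a22) * d x)
          - ((f a12 * g x + α a12 * d x) + (f a22 * g x + α a22 * d x))
          - (f a11 * g x + α a11 * d x) - (f a21 * g x + α a21 * d x) := by noncomm_ring
      rw [expand, ← h1, ← h3, ← h5, sub_zero, sub_zero, sub_self]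
  set T := f (a11 + a12 + a21 + a22) - (f a11 + f a12 + f a21 + f a22) with hT
  have comp : ∀ i l : Fin 2, pel e i * T * pel e l = 0 := by
    intro i l
    have hcond : ∀ k : Fin 2, ∀ x ∈ peirceSet e k k,
        (pel e i * T * pel e 0 + pel e i * T * pel e 1) * g x = 0 := by
      intro k x hx
      have hab : pel e i * T * pel e 0 + pel e i * T * pel e 1
          = pel e i * (T * (pel e 0 + pel e 1)) := by noncomm_ring
      rw [hab, pel_sum, mul_one, mul_assoc, key k x hx, mul_zero]
    have := hg.2.1 l l i le_rfl (pel e i * T * pel e 0) ⟨T, rfl⟩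
      (pel e i * T * pel e 1) ⟨T, rfl⟩ (hcond l)
    fin_cases l
    · exact this.1 rfl
    · exact this.2 rfl
  have hdec : T = pel e 0 * T * pel e 0 + pel e 0 * T * pel e 1
      + (pel e 1 * T * pel e 0 + pel e 1 * T * pel e 1) := by
    calc T = (pel e 0 + pel e 1) * T * (pel e 0 + pel e 1) := by
          rw [pel_sum, one_mul, mul_one]
      _ = _ := by noncomm_ring
  have hT0 : T = 0 := by
    rw [hdec, comp 0 0, comp 0 1, comp 1 0, comp 1 1]; simp
  rw [hT] at hT0
  exact sub_eq_zero.mp hT0
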